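/- arXiv:1709.09953 — 2 statements merged into one kernel-verified Lean document; each statement's English description precedes it below -/
import Mathlib

section
/- The set K(θ) = { (ξˣ, ξ^θ) ∈ ℝ² × ℝ : ξˣ·θ̲ ≤ −f*(ξ^θ) } is closed, convex, and contains 0 in its interior, whenever f is convex lsc with f(t) ≥ γ√(1+t²) for some γ > 0. -/
private lemma sqrt_lower (t : ℝ) : (1 + |t|)/2 ≤ Real.sqrt (1 + t^2) := by
  rw [show (1:ℝ) + t^2 = (1 + |t|^2) by rw [sq_abs]]
  have h : (1 + |t|)/2 ≤ Real.sqrt (((1+|t|)/2)^2) := by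
    rw [Real.sqrt_sq (by positivity)]
  refine h.trans (Real.sqrt_le_sqrt ?_)
  nlinarith [abs_nonneg t, sq_nonneg (|t| - 1)]

/-- `K(θ) = {ξ : ξˣ·θ̲ ≤ −f*(ξ^θ)}` is closed, convex and contains `0`
in its interior, whenever `f` is convex lsc with `f t ≥ γ√(1+t²)`, `γ > 0`. -/
theorem K_closed_convex_zero_mem_interior
    (f : ℝ → EReal) (γ : ℝ) (hγ : 0 < γ)
    (hconv : ∀ t₁ t₂ a b : ℝ, 0 ≤ a → 0 ≤ b → a + b = 1 →
      f (a * t₁ + b * t₂) ≤ (a : EReal) * f t₁ + (b : EReal) * f t₂)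
    (hlsc : LowerSemicontinuous f)
    (hpos : ∀ t : ℝ, 0 ≤ f t)
    (hbound : ∀ t : ℝ, ((γ * Real.sqrt (1 + t ^ 2) : ℝ) : EReal) ≤ f t)
    (fConj : ℝ → EReal)
    (hfConj : ∀ y : ℝ, fConj y = ⨆ t : ℝ, ((t * y : ℝ) : EReal) - f t)
    (θ : ℝ) :
    IsClosed {ξ : (ℝ × ℝ) × ℝ |
        ((ξ.1.1 * Real.cos θ + ξ.1.2 * Real.sin θ : ℝ) : EReal) ≤ -fConj ξ.2} ∧
    Convex ℝ {ξ : (ℝ × ℝ) × ℝ |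
        ((ξ.1.1 * Real.cos θ + ξ.1.2 * Real.sin θ : ℝ) : EReal) ≤ -fConj ξ.2} ∧
    (0 : (ℝ × ℝ) × ℝ) ∈ interior {ξ : (ℝ × ℝ) × ℝ |
        ((ξ.1.1 * Real.cos θ + ξ.1.2 * Real.sin θ : ℝ) : EReal) ≤ -fConj ξ.2} := by
  have hfne : ∀ t : ℝ, f t ≠ ⊥ := fun t =>
    (lt_of_lt_of_le (by simp) (hpos t)).ne'
  set S := {ξ : (ℝ × ℝ) × ℝ |
      ((ξ.1.1 * Real.cos θ + ξ.1.2 * Real.sin θ : ℝ) : EReal) ≤ -fConj ξ.2} with hSdef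
  -- lower semicontinuity of fConj
  have hConjLSC : LowerSemicontinuous fConj := by
    have heq : fConj = fun y => ⨆ t : ℝ, ((t * y : ℝ) : EReal) - f t := funext hfConj
    rw [heq]
    refine lowerSemicontinuous_iSup fun t => ?_
    rcases eq_top_or_lt_top (f t) with htop | hlt
    · simp only [htop, EReal.sub_top]
      exact lowerSemicontinuous_const
    · obtain ⟨r, hr⟩ : ∃ r : ℝ, f t = (r : EReal) :=
        ⟨(f t).toReal, (EReal.coe_toReal hlt.ne (hfne t)).symm⟩
      have hc : Continuous fun y : ℝ => ((t * y - r : ℝ) : EReal) :=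
        continuous_coe_real_ereal.comp ((continuous_const.mul continuous_id).sub continuous_const)
      simp only [hr, ← EReal.coe_sub]
      exact hc.lowerSemicontinuous
  -- key term bound: for each t and ξ ∈ S, when f t = r real
  -- closedness
  have hclosed : IsClosed S := by
    have hS : S = {ξ : (ℝ × ℝ) × ℝ |
        ((-(ξ.1.1 * Real.cos θ + ξ.1.2 * Real.sin θ) : ℝ) : EReal) < fConj ξ.2}ᶜ := by
      ext ξ
      simp only [hSdef, Set.mem_setOf_eq, Set.mem_compl_iff, not_lt, EReal.coe_neg]
      constructor
      · intro h
        exact EReal.le_neg_of_le_neg h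
      · intro h
        exact EReal.le_neg_of_le_neg h
    rw [hS]
    rw [isClosed_compl_iff]
    rw [isOpen_iff_mem_nhds]
    intro ξ hξ
    simp only [Set.mem_setOf_eq] at hξ
    obtain ⟨c, hc1, hc2⟩ := exists_between hξ
    have hreal : Continuous fun x : (ℝ × ℝ) × ℝ =>
        -(x.1.1 * Real.cos θ + x.1.2 * Real.sin θ) :=
      ((continuous_fst.fst.mul continuous_const).add
        (continuous_fst.snd.mul continuous_const)).neg
    have hg : Continuous fun x : (ℝ × ℝ) × ℝ =>
        ((-(x.1.1 * Real.cos θ + x.1.2 * Real.sin θ) : ℝ) : EReal) :=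
      continuous_coe_real_ereal.comp hreal
    have h1 : IsOpen {x : (ℝ × ℝ) × ℝ |
        ((-(x.1.1 * Real.cos θ + x.1.2 * Real.sin θ) : ℝ) : EReal) < c} :=
      isOpen_lt hg continuous_const
    have h2 : IsOpen {x : (ℝ × ℝ) × ℝ | c < fConj x.2} :=
      (lowerSemicontinuous_iff_isOpen_preimage.mp hConjLSC c).preimage continuous_snd
    refine Filter.mem_of_superset ((h1.inter h2).mem_nhds ⟨hc1, hc2⟩) ?_
    rintro x ⟨hxa, hxb⟩
    simp only [Set.mem_setOf_eq] at hxa hxb ⊢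
    exact lt_trans hxa hxb
  refine ⟨hclosed, ?_, ?_⟩
  · -- convexity
    intro ξ hξ η hη a b ha hb hab
    simp only [hSdef, Set.mem_setOf_eq] at hξ hη ⊢
    have hξ' : fConj ξ.2 ≤ ((-(ξ.1.1 * Real.cos θ + ξ.1.2 * Real.sin θ) : ℝ) : EReal) := by
      rw [EReal.coe_neg]; exact EReal.le_neg_of_le_neg hξ
    have hη' : fConj η.2 ≤ ((-(η.1.1 * Real.cos θ + η.1.2 * Real.sin θ) : ℝ) : EReal) := by
      rw [EReal.coe_neg]; exact EReal.le_neg_of_le_neg hη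
    have key : fConj ((a • ξ + b • η).2) ≤
        ((-( (a • ξ + b • η).1.1 * Real.cos θ + (a • ξ + b • η).1.2 * Real.sin θ) : ℝ) : EReal) := by
      rw [hfConj]
      refine iSup_le fun t => ?_
      rcases eq_top_or_lt_top (f t) with htop | hlt
      · simp only [htop, EReal.sub_top]
        exact bot_le
      · obtain ⟨r, hr⟩ : ∃ r : ℝ, f t = (r : EReal) :=
          ⟨(f t).toReal, (EReal.coe_toReal hlt.ne (hfne t)).symm⟩
        have term1 : ((t * ξ.2 - r : ℝ) : EReal) ≤ fConj ξ.2 := by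
          rw [hfConj, EReal.coe_sub]
          exact le_iSup_of_le t (by rw [hr])
        have term2 : ((t * η.2 - r : ℝ) : EReal) ≤ fConj η.2 := by
          rw [hfConj, EReal.coe_sub]
          exact le_iSup_of_le t (by rw [hr])
        have r1 : t * ξ.2 - r ≤ -(ξ.1.1 * Real.cos θ + ξ.1.2 * Real.sin θ) :=
          EReal.coe_le_coe_iff.mp (term1.trans hξ')
        have r2 : t * η.2 - r ≤ -(η.1.1 * Real.cos θ + η.1.2 * Real.sin θ) :=
          EReal.coe_le_coe_iff.mp (term2.trans hη')
        rw [hr, ← EReal.coe_sub, EReal.coe_le_coe_iff]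
        have e1 := mul_le_mul_of_nonneg_left r1 ha
        have e2 := mul_le_mul_of_nonneg_left r2 hb
        have hrab : a * r + b * r = r := by rw [← add_mul, hab, one_mul]
        simp only [Prod.fst_add, Prod.snd_add, Prod.smul_fst, Prod.smul_snd, smul_eq_mul]
        nlinarith [e1, e2, hrab]
    rw [EReal.coe_neg] at key
    exact EReal.le_neg_of_le_neg key
  · -- 0 in interior
    have hconj_small : ∀ y : ℝ, |y| ≤ γ/2 → fConj y ≤ ((-(γ/2) : ℝ) : EReal) := by
      intro y hy
      rw [hfConj]
      refine iSup_le fun t => ?_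
      have step : ((t * y : ℝ) : EReal) - f t ≤
          ((t * y : ℝ) : EReal) - ((γ * Real.sqrt (1 + t ^ 2) : ℝ) : EReal) :=
        EReal.sub_le_sub le_rfl (hbound t)
      refine step.trans ?_
      rw [← EReal.coe_sub, EReal.coe_le_coe_iff]
      have hs := sqrt_lower t
      have hty : t * y ≤ |t| * |y| := by
        calc t * y ≤ |t * y| := le_abs_self _
          _ = |t| * |y| := abs_mul _ _
      have hm : |t| * |y| ≤ |t| * (γ/2) := mul_le_mul_of_nonneg_left hy (abs_nonneg t)
      nlinarith [mul_le_mul_of_nonneg_left hs hγ.le, abs_nonneg t]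
    have hball : Metric.ball (0 : (ℝ × ℝ) × ℝ) (γ/4) ⊆ S := by
      intro ξ hξ
      rw [Metric.mem_ball, dist_zero_right] at hξ
      have h11 : |ξ.1.1| < γ/4 := by
        have := ((norm_fst_le ξ.1).trans (norm_fst_le ξ)).trans_lt hξ
        simpa [Real.norm_eq_abs] using this
      have h12 : |ξ.1.2| < γ/4 := by
        have := ((norm_snd_le ξ.1).trans (norm_fst_le ξ)).trans_lt hξ
        simpa [Real.norm_eq_abs] using this
      have h2 : |ξ.2| < γ/4 := by
        have := (norm_snd_le ξ).trans_lt hξ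
        simpa [Real.norm_eq_abs] using this
      have hconj : fConj ξ.2 ≤ ((-(γ/2) : ℝ) : EReal) :=
        hconj_small ξ.2 (by linarith)
      have hL : ξ.1.1 * Real.cos θ + ξ.1.2 * Real.sin θ ≤ γ/2 := by
        have c1 : ξ.1.1 * Real.cos θ ≤ |ξ.1.1| := by
          calc ξ.1.1 * Real.cos θ ≤ |ξ.1.1 * Real.cos θ| := le_abs_self _
            _ = |ξ.1.1| * |Real.cos θ| := abs_mul _ _
            _ ≤ |ξ.1.1| * 1 := mul_le_mul_of_nonneg_left (Real.abs_cos_le_one θ) (abs_nonneg _)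
            _ = |ξ.1.1| := mul_one _
        have c2 : ξ.1.2 * Real.sin θ ≤ |ξ.1.2| := by
          calc ξ.1.2 * Real.sin θ ≤ |ξ.1.2 * Real.sin θ| := le_abs_self _
            _ = |ξ.1.2| * |Real.sin θ| := abs_mul _ _
            _ ≤ |ξ.1.2| * 1 := mul_le_mul_of_nonneg_left (Real.abs_sin_le_one θ) (abs_nonneg _)
            _ = |ξ.1.2| := mul_one _
        linarith
      show ((ξ.1.1 * Real.cos θ + ξ.1.2 * Real.sin θ : ℝ) : EReal) ≤ -fConj ξ.2
      calc ((ξ.1.1 * Real.cos θ + ξ.1.2 * Real.sin θ : ℝ) : EReal) ≤ ((γ/2 : ℝ) : EReal) :=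
            EReal.coe_le_coe_iff.mpr hL
        _ ≤ -fConj ξ.2 := by
            refine EReal.le_neg_of_le_neg ?_
            rwa [← EReal.coe_neg]
    exact mem_interior_iff_mem_nhds.mpr
      (Filter.mem_of_superset (Metric.ball_mem_nhds 0 (by positivity)) hball)
end

section
/- Let (η₁, η₂) ∈ ℝ² with η₁ ≤ 0. Then the Euclidean projection of (η₁,η₂) onto the set P = {(a,b) : max(0,a)² + (b/α)² ≤ 1} (α > 0) is (η₁, max(−α, min(α, η₂))). -/
/-- for `η₁ ≤ 0`, the Euclidean projection of `(η₁,η₂)` onto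
`P = {(a,b) : max(0,a)² + (b/α)² ≤ 1}` is `(η₁, max(−α, min(α, η₂)))`. -/
theorem projection_P2_left (α : ℝ) (hα : 0 < α) (η₁ η₂ : ℝ) (h₁ : η₁ ≤ 0) :
    (η₁, max (-α) (min α η₂)) ∈ {p : ℝ × ℝ | max 0 p.1 ^ 2 + (p.2 / α) ^ 2 ≤ 1} ∧
    (∀ q ∈ {p : ℝ × ℝ | max 0 p.1 ^ 2 + (p.2 / α) ^ 2 ≤ 1},
      (η₁ - η₁) ^ 2 + (max (-α) (min α η₂) - η₂) ^ 2 ≤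
        (q.1 - η₁) ^ 2 + (q.2 - η₂) ^ 2) ∧
    (∀ q ∈ {p : ℝ × ℝ | max 0 p.1 ^ 2 + (p.2 / α) ^ 2 ≤ 1},
      (q.1 - η₁) ^ 2 + (q.2 - η₂) ^ 2 =
        (η₁ - η₁) ^ 2 + (max (-α) (min α η₂) - η₂) ^ 2 →
      q = (η₁, max (-α) (min α η₂))) := by
  have h0 : max 0 η₁ = 0 := max_eq_left h₁
  have hm1 : -α ≤ max (-α) (min α η₂) := le_max_left _ _
  have hm2 : max (-α) (min α η₂) ≤ α := by
    rcases le_total (-α) (min α η₂) with h | h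
    · rw [max_eq_right h]; exact min_le_left _ _
    · rw [max_eq_left h]; linarith
  have key : ∀ q : ℝ × ℝ, q ∈ {p : ℝ × ℝ | max 0 p.1 ^ 2 + (p.2 / α) ^ 2 ≤ 1} →
      -α ≤ q.2 ∧ q.2 ≤ α := by
    intro q hq
    simp only [Set.mem_setOf_eq] at hq
    have h1 : (0:ℝ) ≤ max 0 q.1 ^ 2 := sq_nonneg _
    have h' : (q.2 / α) ^ 2 ≤ 1 := by linarith
    rw [div_pow, div_le_one (by positivity)] at h'
    constructor <;> nlinarith
  refine ⟨?_, ?_, ?_⟩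
  · have h2 : (max (-α) (min α η₂)) ^ 2 / α ^ 2 ≤ 1 := by
      rw [div_le_one (by positivity)]; nlinarith
    simpa [Set.mem_setOf_eq, h0, div_pow] using h2
  · intro q hq
    obtain ⟨hl, hr⟩ := key q hq
    rcases le_total α η₂ with h | h
    · rw [min_eq_left h, max_eq_right (by linarith : -α ≤ α)]
      nlinarith [sq_nonneg (q.1 - η₁)]
    · rw [min_eq_right h]
      rcases le_total (-α) η₂ with h' | h'
      · rw [max_eq_right h']
        nlinarith [sq_nonneg (q.1 - η₁)]
      · rw [max_eq_left h']
        nlinarith [sq_nonneg (q.1 - η₁)]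
  · intro q hq heq
    obtain ⟨hl, hr⟩ := key q hq
    have hq1 : q.1 = η₁ ∧ q.2 = max (-α) (min α η₂) := by
      rcases le_total α η₂ with h | h
      · rw [min_eq_left h, max_eq_right (by linarith : -α ≤ α)] at heq ⊢
        constructor <;> nlinarith [sq_nonneg (q.1 - η₁), sq_nonneg (q.2 - α)]
      · rw [min_eq_right h] at heq ⊢
        rcases le_total (-α) η₂ with h' | h'
        · rw [max_eq_right h'] at heq ⊢
          constructor <;> nlinarith [sq_nonneg (q.1 - η₁), sq_nonneg (q.2 - η₂)]
        · rw [max_eq_left h'] at heq ⊢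
          constructor <;> nlinarith [sq_nonneg (q.1 - η₁), sq_nonneg (q.2 + α)]
    exact Prod.ext hq1.1 hq1.2
end
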